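/- Let φ(u) = exp(-u²/2)/√(2π) be the standard normal density and Φ the standard normal cdf. The function F(z) = −φ(z)/z − Φ(z) is strictly monotonically increasing on (−∞, 0); equivalently, the relative-value bound R̄_δ = −φ(z_δ)/z_δ − δ is strictly increasing in δ on (0, 1/2). -/

import Mathlib

open MeasureTheory Real

/-- The standard normal density φ(u) = exp(-u²/2)/√(2π). -/
noncomputable def stdNormalPdf (u : ℝ) : ℝ := Real.exp (-u ^ 2 / 2) / Real.sqrt (2 * Real.pi)

/-- The standard normal cdf Φ(z) = ∫_{-∞}^z φ(u) du. -/
noncomputable def stdNormalCdf (z : ℝ) : ℝ := ∫ u in Set.Iic z, stdNormalPdf u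

/-!
Since φ'(z) = -z φ(z) and Φ' = φ, the derivative of F(z) = -φ(z)/z - Φ(z) is
φ(z) + φ(z)/z² - φ(z) = φ(z)/z², which is positive for z ≠ 0.
-/

theorem hasDerivAt_integral_Iic {E : Type*} [NormedAddCommGroup E] [NormedSpace ℝ E]
    [CompleteSpace E] {f : ℝ → E} (hf : Integrable f) {z : ℝ} (hz : ContinuousAt f z) :
    HasDerivAt (fun x => ∫ t in Set.Iic x, f t) (f z) z := by
  have hsplit : (fun x => ∫ t in Set.Iic x, f t) =
      fun x => (∫ t in Set.Iic z, f t) + ∫ t in z..x, f t := by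
    funext x
    rw [← intervalIntegral.integral_Iic_sub_Iic hf.integrableOn hf.integrableOn,
      add_sub_cancel]
  rw [hsplit]
  exact (intervalIntegral.integral_hasDerivAt_right hf.intervalIntegrable
    (hf.aestronglyMeasurable.stronglyMeasurableAtFilter) hz).const_add _

theorem stdNormalPdf_pos (u : ℝ) : 0 < stdNormalPdf u := by
  unfold stdNormalPdf
  positivity

theorem continuous_stdNormalPdf : Continuous stdNormalPdf := by
  unfold stdNormalPdf
  fun_prop

theorem integrable_stdNormalPdf : Integrable stdNormalPdf := by
  refine ((integrable_exp_neg_mul_sq (by norm_num : (0 : ℝ) < 1 / 2)).div_const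
    (Real.sqrt (2 * Real.pi))).congr (Filter.Eventually.of_forall fun u => ?_)
  simp only [stdNormalPdf]
  ring_nf

theorem hasDerivAt_stdNormalPdf (u : ℝ) :
    HasDerivAt stdNormalPdf (-u * stdNormalPdf u) u := by
  have hexponent : HasDerivAt (fun x : ℝ => -x ^ 2 / 2) (-u) u := by
    refine ((hasDerivAt_pow 2 u).neg.div_const 2).congr_deriv ?_
    ring
  refine ((hexponent.exp).div_const (Real.sqrt (2 * Real.pi))).congr_deriv ?_
  unfold stdNormalPdf
  ring

theorem hasDerivAt_stdNormalCdf (z : ℝ) : HasDerivAt stdNormalCdf (stdNormalPdf z) z :=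
  hasDerivAt_integral_Iic integrable_stdNormalPdf continuous_stdNormalPdf.continuousAt

theorem hasDerivAt_strangleBound {z : ℝ} (hz : z ≠ 0) :
    HasDerivAt (fun z : ℝ => -stdNormalPdf z / z - stdNormalCdf z)
      (stdNormalPdf z / z ^ 2) z := by
  refine (((hasDerivAt_stdNormalPdf z).neg.div (hasDerivAt_id z) hz).sub
    (hasDerivAt_stdNormalCdf z)).congr_deriv ?_
  simp only [id, Pi.neg_apply]
  field_simp
  ring

/-- The relative-value bound F(z) = −φ(z)/z − Φ(z) is strictly increasing on (−∞, 0). -/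
theorem strangle_bound_strictMonoOn :
    StrictMonoOn (fun z : ℝ => -stdNormalPdf z / z - stdNormalCdf z) (Set.Iio 0) := by
  apply strictMonoOn_of_hasDerivWithinAt_pos (convex_Iio 0)
    (f' := fun z => stdNormalPdf z / z ^ 2)
  · exact fun z hz => (hasDerivAt_strangleBound hz.ne).continuousAt.continuousWithinAt
  all_goals rw [interior_Iio]
  · exact fun z hz => (hasDerivAt_strangleBound hz.ne).hasDerivWithinAt
  · exact fun z hz => div_pos (stdNormalPdf_pos z) (sq_pos_of_neg hz)
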